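/- arXiv:1307.1176 — 2 statements merged into one kernel-verified Lean document; each statement's English description precedes it below -/
import Mathlib

section
/- Let k ∈ ℝ, d > 0, an integer p ≥ 1, and W > 0 be given. Then there exist constants C > 0 and R > 0 such that for all ρ ≥ R and all w ∈ [−W, W], the p-th alternating difference of the shifted Helmholtz kernel satisfies |Σ_{q=0}^p (−1)^q binom(p,q) · e^{i k √(ρ² + (w + q d)²)} / √(ρ² + (w + q d)²)| ≤ C · ρ^{−(⌈p/2⌉ + 1)}, where ⌈·⌉ denotes the ceiling. -/
/-!
Write `f(t) = e^{ikr}/r` with `r = √(ρ² + t²)`. The alternating sum is `(-1)^p Δ_d^p f(w)`, and by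
the mean value theorem `|Δ_d^p f(w)| ≤ |d|^p sup |f⁽ᵖ⁾|` over `|t - w| ≤ p|d|`. Since `r' = t/r`,
differentiating `t^a e^{ikr}/r^n` gives terms of types `(a - 1, n)`, `(a + 1, n + 1)` and
`(a + 1, n + 2)`, so `f⁽ᵖ⁾` is a combination, with coefficients independent of `ρ`, of such
terms with `p + a + 2 ≤ 2n`. For bounded `t` each is `O(ρ^{-n})`, and `n ≥ ⌈p/2⌉ + 1`.
-/

open Metric fwdDiff Complex

section FiniteDifferences

variable {E : Type*} [NormedAddCommGroup E] [NormedSpace ℝ E]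

theorem norm_fwdDiff_le_of_hasDerivAt {F F' : ℝ → E} (hF : ∀ t, HasDerivAt F (F' t) t)
    {x r h M : ℝ} (hM : ∀ t ∈ closedBall x (r + |h|), ‖F' t‖ ≤ M) {t : ℝ}
    (ht : t ∈ closedBall x r) : ‖Δ_[h] F t‖ ≤ M * |h| := by
  have hr : closedBall x r ⊆ closedBall x (r + |h|) :=
    closedBall_subset_closedBall (le_add_of_nonneg_right (abs_nonneg h))
  have hth : t + h ∈ closedBall x (r + |h|) := by
    rw [mem_closedBall] at ht ⊢
    calc dist (t + h) x ≤ dist (t + h) t + dist t x := dist_triangle _ _ _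
      _ = |h| + dist t x := by rw [dist_self_add_left, Real.norm_eq_abs]
      _ ≤ r + |h| := by linarith
  simpa [fwdDiff, Real.norm_eq_abs] using Convex.norm_image_sub_le_of_norm_hasDerivWithin_le
    (fun u _ => (hF u).hasDerivWithinAt) hM (convex_closedBall x _) (hr ht) hth

theorem norm_fwdDiff_iter_le_of_hasDerivAt {f : ℕ → ℝ → E}
    (hf : ∀ j t, HasDerivAt (f j) (f (j + 1) t) t) {x h M : ℝ} (p : ℕ)
    (hM : ∀ t ∈ closedBall x (p * |h|), ‖f p t‖ ≤ M) :
    ‖(Δ_[h])^[p] (f 0) x‖ ≤ |h| ^ p * M := by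
  induction p generalizing f M with
  | zero => simpa using hM x (mem_closedBall_self (by simp))
  | succ p ih =>
    have hΔf : ∀ j t, HasDerivAt (Δ_[h] (f j)) (Δ_[h] (f (j + 1)) t) t := fun j t =>
      ((hf j (t + h)).comp_add_const t h).sub (hf j t)
    have hΔM : ∀ t ∈ closedBall x (p * |h|), ‖Δ_[h] (f p) t‖ ≤ M * |h| := fun t ht =>
      norm_fwdDiff_le_of_hasDerivAt (hf p) (by push_cast at hM; rwa [add_mul, one_mul] at hM) ht
    rw [Function.iterate_succ_apply, pow_succ, mul_assoc, mul_comm |h|]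
    exact ih hΔf hΔM

end FiniteDifferences

theorem sum_neg_one_pow_choose_shift_eq_fwdDiff_iter {M R : Type*} [Ring M] [CommRing R]
    (f : M → R) (h x : M) (p : ℕ) :
    ∑ q ∈ Finset.range (p + 1), (-1 : R) ^ q * p.choose q * f (x + q * h)
      = (-1) ^ p * (Δ_[h])^[p] f x := by
  rw [fwdDiff_iter_eq_sum_shift, Finset.mul_sum]
  refine Finset.sum_congr rfl fun q hq => ?_
  obtain ⟨j, rfl⟩ := Nat.exists_eq_add_of_le (Finset.mem_range_succ_iff.mp hq)
  simp only [Nat.add_sub_cancel_left, nsmul_eq_mul, zsmul_eq_mul]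
  push_cast
  have : (-1 : R) ^ (j + j) = 1 := Even.neg_one_pow ⟨j, rfl⟩
  linear_combination -(-1 : R) ^ q * ((q + j).choose q : R) * f (x + q * h) * this

namespace HelmholtzKernel

noncomputable def hypot (ρ t : ℝ) : ℝ := √(ρ ^ 2 + t ^ 2)

theorem hypot_pos {ρ : ℝ} (hρ : ρ ≠ 0) (t : ℝ) : 0 < hypot ρ t :=
  Real.sqrt_pos.mpr (by positivity)

theorem le_hypot (ρ t : ℝ) : ρ ≤ hypot ρ t :=
  Real.le_sqrt_of_sq_le (by nlinarith)

theorem hasDerivAt_hypot {ρ : ℝ} (hρ : ρ ≠ 0) (t : ℝ) :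
    HasDerivAt (hypot ρ) (t / hypot ρ t) t := by
  have h := ((hasDerivAt_pow 2 t).const_add (ρ ^ 2)).sqrt (by positivity)
  convert h using 1
  · rfl
  · unfold hypot
    field_simp
    ring

noncomputable def kernelTerm (k : ℝ) (a n : ℕ) (ρ t : ℝ) : ℂ :=
  (t : ℂ) ^ a * exp (I * k * hypot ρ t) / (hypot ρ t : ℂ) ^ n

theorem norm_kernelTerm (k : ℝ) (a n : ℕ) {ρ : ℝ} (hρ : ρ ≠ 0) (t : ℝ) :
    ‖kernelTerm k a n ρ t‖ = |t| ^ a / hypot ρ t ^ n := by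
  simp [kernelTerm, norm_exp, abs_of_pos (hypot_pos hρ t)]

theorem hasDerivAt_kernelTerm (k : ℝ) (a n : ℕ) {ρ : ℝ} (hρ : ρ ≠ 0) (t : ℝ) :
    HasDerivAt (kernelTerm k a n ρ)
      (a * kernelTerm k (a - 1) n ρ t + I * k * kernelTerm k (a + 1) (n + 1) ρ t
        - n * kernelTerm k (a + 1) (n + 2) ρ t) t := by
  have hr : HasDerivAt (fun u => (hypot ρ u : ℂ)) ((t / hypot ρ t : ℝ) : ℂ) t :=
    (hasDerivAt_hypot hρ t).ofReal_comp
  have hr0 : (hypot ρ t : ℂ) ≠ 0 := ofReal_ne_zero.mpr (hypot_pos hρ t).ne'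
  have h := (((hasDerivAt_pow a (t : ℂ)).comp_ofReal).mul
    ((hr.const_mul (I * k)).cexp)).div (hr.pow n) (pow_ne_zero n hr0)
  refine h.congr_deriv ?_
  rcases a with _ | a <;> rcases n with _ | n <;>
  · simp only [kernelTerm, Pi.pow_apply, Pi.mul_apply, Nat.add_sub_cancel]
    push_cast
    field_simp
    ring

theorem ceil_half_add_one_le {p n : ℕ} (h : p + 2 ≤ 2 * n) : ⌈(p : ℝ) / 2⌉₊ + 1 ≤ n := by
  rw [← Nat.le_sub_iff_add_le (by omega), Nat.ceil_le]
  have : ((p + 2 : ℕ) : ℝ) ≤ ((2 * n : ℕ) : ℝ) := by exact_mod_cast h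
  push_cast [Nat.cast_sub (show 1 ≤ n by omega)] at this ⊢
  linarith

/-- The coefficients are constants rather than functions of `ρ`, so that the bounds on
members of this space are uniform in `ρ`. -/
def kernelDerivSpan (k : ℝ) (p : ℕ) : Submodule ℂ (ℝ → ℝ → ℂ) :=
  Submodule.span ℂ {F | ∃ a n, p + a + 2 ≤ 2 * n ∧ F = kernelTerm k a n}

theorem kernelTerm_mem_kernelDerivSpan (k : ℝ) {p a n : ℕ} (h : p + a + 2 ≤ 2 * n) :
    kernelTerm k a n ∈ kernelDerivSpan k p :=
  Submodule.subset_span ⟨a, n, h, rfl⟩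

theorem exists_hasDerivAt_mem_kernelDerivSpan {k : ℝ} {p : ℕ} {F : ℝ → ℝ → ℂ}
    (hF : F ∈ kernelDerivSpan k p) :
    ∃ G ∈ kernelDerivSpan k (p + 1), ∀ ρ, ρ ≠ 0 → ∀ t, HasDerivAt (F ρ) (G ρ t) t := by
  induction hF using Submodule.span_induction with
  | mem F hF =>
    obtain ⟨a, n, han, rfl⟩ := hF
    refine ⟨(a : ℂ) • kernelTerm k (a - 1) n + (I * k) • kernelTerm k (a + 1) (n + 1)
      - (n : ℂ) • kernelTerm k (a + 1) (n + 2), ?_, fun ρ hρ t => ?_⟩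
    · refine sub_mem (add_mem ?_ (Submodule.smul_mem _ _ ?_)) (Submodule.smul_mem _ _ ?_)
      · rcases a with _ | a
        · simp
        · exact Submodule.smul_mem _ _ (kernelTerm_mem_kernelDerivSpan k (by omega))
      all_goals exact kernelTerm_mem_kernelDerivSpan k (by omega)
    · simpa using hasDerivAt_kernelTerm k a n hρ t
  | zero => exact ⟨0, zero_mem _, fun ρ _ t => hasDerivAt_const t 0⟩
  | add F G _ _ hF hG =>
    obtain ⟨F', hF', hFF'⟩ := hF
    obtain ⟨G', hG', hGG'⟩ := hG
    exact ⟨F' + G', add_mem hF' hG', fun ρ hρ t => (hFF' ρ hρ t).add (hGG' ρ hρ t)⟩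
  | smul c F _ hF =>
    obtain ⟨F', hF', hFF'⟩ := hF
    exact ⟨c • F', Submodule.smul_mem _ c hF', fun ρ hρ t => (hFF' ρ hρ t).const_mul c⟩

theorem exists_norm_le_of_mem_kernelDerivSpan {k : ℝ} {p : ℕ} {F : ℝ → ℝ → ℂ}
    (hF : F ∈ kernelDerivSpan k p) (T : ℝ) :
    ∃ K, ∀ ρ, 1 ≤ ρ → ∀ t, |t| ≤ T → ‖F ρ t‖ ≤ K / ρ ^ (⌈(p : ℝ) / 2⌉₊ + 1) := by
  induction hF using Submodule.span_induction with
  | mem F hF =>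
    obtain ⟨a, n, han, rfl⟩ := hF
    refine ⟨T ^ a, fun ρ hρ t ht => ?_⟩
    have hρ0 : 0 < ρ := by linarith
    have hT : 0 ≤ T := (abs_nonneg t).trans ht
    calc ‖kernelTerm k a n ρ t‖ = |t| ^ a / hypot ρ t ^ n := norm_kernelTerm k a n hρ0.ne' t
      _ ≤ T ^ a / ρ ^ n := by gcongr; exact le_hypot ρ t
      _ ≤ T ^ a / ρ ^ (⌈(p : ℝ) / 2⌉₊ + 1) := by
        gcongr
        exact ceil_half_add_one_le (by omega)
  | zero => exact ⟨0, fun ρ _ t _ => by simp⟩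
  | add F G _ _ hF hG =>
    obtain ⟨K, hK⟩ := hF
    obtain ⟨L, hL⟩ := hG
    refine ⟨K + L, fun ρ hρ t ht => ?_⟩
    rw [add_div]
    exact (norm_add_le _ _).trans (add_le_add (hK ρ hρ t ht) (hL ρ hρ t ht))
  | smul c F _ hF =>
    obtain ⟨K, hK⟩ := hF
    refine ⟨‖c‖ * K, fun ρ hρ t ht => ?_⟩
    rw [Pi.smul_apply, Pi.smul_apply, norm_smul, mul_div_assoc]
    exact mul_le_mul_of_nonneg_left (hK ρ hρ t ht) (norm_nonneg c)

theorem exists_iteratedDeriv_kernel_eq (k : ℝ) (p : ℕ) :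
    ∃ F ∈ kernelDerivSpan k p, ∀ ρ, ρ ≠ 0 → iteratedDeriv p (kernelTerm k 0 1 ρ) = F ρ := by
  induction p with
  | zero => exact ⟨_, kernelTerm_mem_kernelDerivSpan k le_rfl, fun ρ _ => iteratedDeriv_zero⟩
  | succ p ih =>
    obtain ⟨F, hF, hFeq⟩ := ih
    obtain ⟨G, hG, hFG⟩ := exists_hasDerivAt_mem_kernelDerivSpan hF
    refine ⟨G, hG, fun ρ hρ => ?_⟩
    rw [iteratedDeriv_succ, hFeq ρ hρ]
    exact funext fun t => (hFG ρ hρ t).deriv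

theorem hasDerivAt_iteratedDeriv_kernel (k : ℝ) {ρ : ℝ} (hρ : ρ ≠ 0) (j : ℕ) (t : ℝ) :
    HasDerivAt (iteratedDeriv j (kernelTerm k 0 1 ρ))
      (iteratedDeriv (j + 1) (kernelTerm k 0 1 ρ) t) t := by
  obtain ⟨F, hF, hFeq⟩ := exists_iteratedDeriv_kernel_eq k j
  obtain ⟨G, -, hFG⟩ := exists_hasDerivAt_mem_kernelDerivSpan hF
  rw [iteratedDeriv_succ, hFeq ρ hρ]
  exact (hFG ρ hρ t).differentiableAt.hasDerivAt

end HelmholtzKernel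

open HelmholtzKernel

theorem shifted_kernel_alternating_difference_decay_general
    (k : ℝ) (d : ℝ) (p : ℕ) (W : ℝ) :
    ∃ C > 0, ∃ R > 0, ∀ ρ : ℝ, R ≤ ρ → ∀ w ∈ Set.Icc (-W) W,
      ‖∑ q ∈ Finset.range (p + 1),
          (-1 : ℂ) ^ q * (p.choose q : ℂ) *
            Complex.exp (Complex.I * (k : ℂ) *
              ((Real.sqrt (ρ ^ 2 + (w + (q : ℝ) * d) ^ 2) : ℝ) : ℂ)) /
            ((Real.sqrt (ρ ^ 2 + (w + (q : ℝ) * d) ^ 2) : ℝ) : ℂ)‖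
        ≤ C / ρ ^ (⌈(p : ℝ) / 2⌉₊ + 1) := by
  obtain ⟨F, hF, hFeq⟩ := exists_iteratedDeriv_kernel_eq k p
  obtain ⟨K, hK⟩ := exists_norm_le_of_mem_kernelDerivSpan hF (W + p * |d|)
  refine ⟨|d| ^ p * |K| + 1, by positivity, 1, one_pos, fun ρ hρ w hw => ?_⟩
  have hρ0 : ρ ≠ 0 := by positivity
  have hsum := sum_neg_one_pow_choose_shift_eq_fwdDiff_iter (kernelTerm k 0 1 ρ) d w p
  simp only [kernelTerm, hypot, pow_zero, pow_one, one_mul, ← mul_div_assoc] at hsum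
  have hbound : ∀ t ∈ closedBall w (p * |d|),
      ‖iteratedDeriv p (kernelTerm k 0 1 ρ) t‖ ≤ K / ρ ^ (⌈(p : ℝ) / 2⌉₊ + 1) := by
    intro t ht
    rw [hFeq ρ hρ0]
    refine hK ρ hρ t ?_
    have := abs_le.mpr hw
    have := abs_sub_abs_le_abs_sub t w
    rw [mem_closedBall, Real.dist_eq] at ht
    linarith
  rw [hsum, norm_mul, norm_pow, norm_neg, norm_one, one_pow, one_mul]
  calc ‖(Δ_[d])^[p] (kernelTerm k 0 1 ρ) w‖
      ≤ |d| ^ p * (K / ρ ^ (⌈(p : ℝ) / 2⌉₊ + 1)) :=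
        norm_fwdDiff_iter_le_of_hasDerivAt (hasDerivAt_iteratedDeriv_kernel k hρ0) p hbound
    _ ≤ (|d| ^ p * |K| + 1) / ρ ^ (⌈(p : ℝ) / 2⌉₊ + 1) := by
        rw [← mul_div_assoc]
        gcongr
        exact (mul_le_mul_of_nonneg_left (le_abs_self K) (by positivity)).trans (by linarith)

/-- Decay of the `p`-th alternating difference of the shifted Helmholtz kernel:
`|Σ_{q=0}^p (-1)^q (p choose q) e^{ik√(ρ²+(w+qd)²)}/√(ρ²+(w+qd)²)| ≤ C ρ^{-(⌈p/2⌉+1)}`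
uniformly for `w ∈ [-W, W]` and `ρ ≥ R`. -/
theorem shifted_kernel_alternating_difference_decay
    (k : ℝ) (d : ℝ) (hd : 0 < d) (p : ℕ) (hp : 1 ≤ p) (W : ℝ) (hW : 0 < W) :
    ∃ C > 0, ∃ R > 0, ∀ ρ : ℝ, R ≤ ρ → ∀ w ∈ Set.Icc (-W) W,
      ‖∑ q ∈ Finset.range (p + 1),
          (-1 : ℂ) ^ q * (p.choose q : ℂ) *
            Complex.exp (Complex.I * (k : ℂ) *
              ((Real.sqrt (ρ ^ 2 + (w + (q : ℝ) * d) ^ 2) : ℝ) : ℂ)) /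
            ((Real.sqrt (ρ ^ 2 + (w + (q : ℝ) * d) ^ 2) : ℝ) : ℂ)‖
        ≤ C / ρ ^ (⌈(p : ℝ) / 2⌉₊ + 1) :=
  shifted_kernel_alternating_difference_decay_general k d p W
end

section
/- Let f : ℝ² → ℝ be twice continuously differentiable on a neighborhood of (x₀, y₀) and let θ ∈ ℝ. For ρ ≠ 0 define R(ρ) = (−ρ cos θ, −ρ sin θ, f(x₀,y₀) − f(x₀ + ρ cos θ, y₀ + ρ sin θ)) ∈ ℝ³ and N(ρ) = (−∂ₓf(x₀ + ρ cos θ, y₀ + ρ sin θ), −∂_yf(x₀ + ρ cos θ, y₀ + ρ sin θ), 1) ∈ ℝ³. Then as ρ → 0 through nonzero values, (R(ρ) · N(ρ)) / ρ² converges to (1/2)(∂ₓₓf(x₀,y₀) cos²θ + 2 ∂ₓᵧf(x₀,y₀) cos θ sin θ + ∂ᵧᵧf(x₀,y₀) sin²θ). -/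
/-!
Along the line `ρ ↦ p + ρ • v`, with `p = (x₀, y₀)` and `v = (cos θ, sin θ)`, let `g ρ = f (p + ρ • v)`.
The dot product `R(ρ) · N(ρ)` is `ρ g'(ρ) - (g ρ - g 0)`, whose derivative is `ρ g''(ρ)`; one
application of L'Hôpital's rule against `ρ²` gives the limit `g''(0) / 2 = D²f(p)(v, v) / 2`, and
symmetry of the second derivative expands this into the three second partials.
-/

open Filter Topology

theorem tendsto_mul_deriv_sub_sub_div_sq {g g' g'' : ℝ → ℝ}
    (hg : ∀ᶠ ρ in 𝓝 0, HasDerivAt g (g' ρ) ρ) (hg' : ∀ᶠ ρ in 𝓝 0, HasDerivAt g' (g'' ρ) ρ)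
    (hg'' : ContinuousAt g'' 0) :
    Tendsto (fun ρ => (ρ * g' ρ - (g ρ - g 0)) / ρ ^ 2) (𝓝[≠] 0) (𝓝 (g'' 0 / 2)) := by
  have hderiv : ∀ᶠ ρ in 𝓝 0, HasDerivAt (fun ρ => ρ * g' ρ - (g ρ - g 0)) (ρ * g'' ρ) ρ := by
    filter_upwards [hg, hg'] with ρ h₁ h₂
    exact (((hasDerivAt_id' ρ).mul h₂).sub (h₁.sub_const (g 0))).congr_deriv (by ring)
  refine HasDerivAt.lhopital_zero_nhdsNE (nhdsWithin_le_nhds hderiv)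
    (.of_forall fun ρ => hasDerivAt_pow 2 ρ) ?_ ?_ ?_ ?_
  · filter_upwards [self_mem_nhdsWithin] with ρ hρ
    simpa using hρ
  · simpa using (hderiv.self_of_nhds.continuousAt.tendsto).mono_left nhdsWithin_le_nhds
  · simpa using ((continuous_pow 2).tendsto' (0 : ℝ) 0 (by simp)).mono_left nhdsWithin_le_nhds
  · refine ((hg''.tendsto.div_const 2).mono_left nhdsWithin_le_nhds).congr' ?_
    filter_upwards [self_mem_nhdsWithin] with ρ (hρ : ρ ≠ 0)
    field_simp
    norm_num

theorem ContDiffAt.tendsto_mul_fderiv_sub_sub_div_sq {E : Type*} [NormedAddCommGroup E]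
    [NormedSpace ℝ E] {f : E → ℝ} {p : E} (hf : ContDiffAt ℝ 2 f p) (v : E) :
    Tendsto (fun ρ : ℝ => (ρ * fderiv ℝ f (p + ρ • v) v - (f (p + ρ • v) - f p)) / ρ ^ 2)
      (𝓝[≠] 0) (𝓝 (fderiv ℝ (fderiv ℝ f) p v v / 2)) := by
  have hline : ∀ ρ : ℝ, HasDerivAt (fun t : ℝ => p + t • v) v ρ := fun ρ => by
    simpa using ((hasDerivAt_id ρ).smul_const v).const_add p
  have hline_cont : ContinuousAt (fun t : ℝ => p + t • v) 0 := (hline 0).continuousAt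
  have hnear : ∀ᶠ ρ : ℝ in 𝓝 0, ContDiffAt ℝ 2 f (p + ρ • v) := by
    have hline_tendsto : Tendsto (fun t : ℝ => p + t • v) (𝓝 0) (𝓝 p) := by
      simpa using hline_cont.tendsto
    exact hline_tendsto.eventually (hf.eventually (by simp))
  have hf' : ContDiffAt ℝ 1 (fderiv ℝ f) p := hf.fderiv_right le_rfl
  simpa using tendsto_mul_deriv_sub_sub_div_sq (g := fun ρ => f (p + ρ • v))
    (g'' := fun ρ => fderiv ℝ (fderiv ℝ f) (p + ρ • v) v v)
    (hnear.mono fun ρ hρ =>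
      (hρ.differentiableAt two_ne_zero).hasFDerivAt.comp_hasDerivAt ρ (hline ρ))
    (hnear.mono fun ρ hρ =>
      (ContinuousLinearMap.apply ℝ ℝ v).hasFDerivAt.comp_hasDerivAt ρ
        (((hρ.fderiv_right le_rfl).differentiableAt one_ne_zero).hasFDerivAt.comp_hasDerivAt ρ
          (hline ρ)))
    (((hf'.continuousAt_fderiv one_ne_zero).comp_of_eq hline_cont (by simp)).clm_apply
      continuousAt_const |>.clm_apply continuousAt_const)

theorem fderiv_clm_apply_const {𝕜 E F G : Type*} [NontriviallyNormedField 𝕜]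
    [NormedAddCommGroup E] [NormedSpace 𝕜 E] [NormedAddCommGroup F] [NormedSpace 𝕜 F]
    [NormedAddCommGroup G] [NormedSpace 𝕜 G] {c : E → F →L[𝕜] G} {x : E}
    (hc : DifferentiableAt 𝕜 c x) (u : F) (w : E) :
    fderiv 𝕜 (fun y => c y u) x w = fderiv 𝕜 c x w u := by
  simp [fderiv_clm_apply hc (differentiableAt_const u)]

theorem map_prodMk_eq_smul_add_smul {R M F : Type*} [Semiring R] [AddCommMonoid M] [Module R M]
    [FunLike F (R × R) M] [LinearMapClass F R (R × R) M] (L : F) (a b : R) :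
    L (a, b) = a • L (1, 0) + b • L (0, 1) := by
  rw [← map_smul, ← map_smul, ← map_add]
  simp

theorem ContinuousLinearMap.apply_prodMk_prodMk {𝕜 : Type*} [NontriviallyNormedField 𝕜]
    (B : 𝕜 × 𝕜 →L[𝕜] 𝕜 × 𝕜 →L[𝕜] 𝕜) (hB : B (1, 0) (0, 1) = B (0, 1) (1, 0)) (a b : 𝕜) :
    B (a, b) (a, b) =
      B (1, 0) (1, 0) * a ^ 2 + 2 * B (0, 1) (1, 0) * a * b + B (0, 1) (0, 1) * b ^ 2 := by
  rw [map_prodMk_eq_smul_add_smul B, add_apply, smul_apply, smul_apply,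
    map_prodMk_eq_smul_add_smul (B (1, 0)), map_prodMk_eq_smul_add_smul (B (0, 1)), hB]
  simp only [smul_eq_mul]
  ring

/-- For `f` twice continuously differentiable near `(x₀,y₀)`, with
`R(ρ) = (-ρ cos θ, -ρ sin θ, f(x₀,y₀) - f(x₀+ρ cos θ, y₀+ρ sin θ))` and
`N(ρ) = (-∂ₓf(pt_ρ), -∂ᵧf(pt_ρ), 1)` where `pt_ρ = (x₀+ρ cos θ, y₀+ρ sin θ)`, one has
`(R(ρ)·N(ρ))/ρ² → (1/2)(∂ₓₓf cos²θ + 2 ∂ₓᵧf cos θ sin θ + ∂ᵧᵧf sin²θ)` as `ρ → 0`, `ρ ≠ 0`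
(the dot product written out in coordinates). -/
theorem polar_limit_of_chord_dot_normal
    (f : ℝ × ℝ → ℝ) (x₀ y₀ : ℝ)
    (U : Set (ℝ × ℝ)) (hU : U ∈ nhds ((x₀, y₀) : ℝ × ℝ)) (hf : ContDiffOn ℝ 2 f U)
    (θ : ℝ) :
    Filter.Tendsto (fun ρ : ℝ =>
        ((-(ρ * Real.cos θ)) *
            (-(fderiv ℝ f (x₀ + ρ * Real.cos θ, y₀ + ρ * Real.sin θ) (1, 0))) +
          (-(ρ * Real.sin θ)) *
            (-(fderiv ℝ f (x₀ + ρ * Real.cos θ, y₀ + ρ * Real.sin θ) (0, 1))) +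
          (f (x₀, y₀) - f (x₀ + ρ * Real.cos θ, y₀ + ρ * Real.sin θ)) * 1) / ρ ^ 2)
      (nhdsWithin (0 : ℝ) {0}ᶜ)
      (nhds ((1 / 2) *
        (fderiv ℝ (fun q : ℝ × ℝ => fderiv ℝ f q (1, 0)) (x₀, y₀) (1, 0) * Real.cos θ ^ 2 +
          2 * fderiv ℝ (fun q : ℝ × ℝ => fderiv ℝ f q (1, 0)) (x₀, y₀) (0, 1) *
            Real.cos θ * Real.sin θ +
          fderiv ℝ (fun q : ℝ × ℝ => fderiv ℝ f q (0, 1)) (x₀, y₀) (0, 1) * Real.sin θ ^ 2))) := by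
  have hp : ContDiffAt ℝ 2 f (x₀, y₀) := hf.contDiffAt hU
  have hdiff : DifferentiableAt ℝ (fderiv ℝ f) (x₀, y₀) :=
    (hp.fderiv_right le_rfl).differentiableAt one_ne_zero
  have hsymm : fderiv ℝ (fderiv ℝ f) (x₀, y₀) (1, 0) (0, 1) =
      fderiv ℝ (fderiv ℝ f) (x₀, y₀) (0, 1) (1, 0) :=
    hp.isSymmSndFDerivAt (by simp) _ _
  have key := hp.tendsto_mul_fderiv_sub_sub_div_sq (Real.cos θ, Real.sin θ)
  rw [ContinuousLinearMap.apply_prodMk_prodMk _ hsymm] at key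
  simp only [fderiv_clm_apply_const hdiff]
  convert key using 2 with ρ
  · simp only [Prod.smul_mk, Prod.mk_add_mk, smul_eq_mul]
    rw [map_prodMk_eq_smul_add_smul _ (Real.cos θ), smul_eq_mul, smul_eq_mul]
    ring
  · ring
end
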